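/- Let K be a field of characteristic zero and let (x, y, z) ∈ K³ with (x, y, z) ≠ (0, 0, 0). Set G1 = 9x^5 − 10x^3y^2 + xy^4 + 10x^3yz − 2xy^3z, G2 = 9x^4y − 10x^2y^3 + y^5 + 9x^4z − y^4z, G3 = 9x^4z − 10x^2y^2z + y^4z. Then G1 = G2 = G3 = 0 if and only if (x, y, z) is a nonzero scalar multiple of one of the five triples (0,0,1), (1,1,0), (1,−1,0), (1,3,0), (1,−3,0). (Equivalently, the indeterminacy locus of Φ consists exactly of the points p = [0,0,1], p1 = [1,1,0], p2 = [1,−1,0], p3 = [1,3,0], p4 = [1,−3,0].) -/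
import Mathlib


namespace Stmt15

/-- First component of the birational map `Φ`. -/
def G1 {K : Type*} [Field K] (x y z : K) : K :=
  9 * x ^ 5 - 10 * x ^ 3 * y ^ 2 + x * y ^ 4 + 10 * x ^ 3 * y * z - 2 * x * y ^ 3 * z

/-- Second component of the birational map `Φ`. -/
def G2 {K : Type*} [Field K] (x y z : K) : K :=
  9 * x ^ 4 * y - 10 * x ^ 2 * y ^ 3 + y ^ 5 + 9 * x ^ 4 * z - y ^ 4 * z

/-- Third component of the birational map `Φ`. -/
def G3 {K : Type*} [Field K] (x y z : K) : K :=
  9 * x ^ 4 * z - 10 * x ^ 2 * y ^ 2 * z + y ^ 4 * z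

/-- The indeterminacy locus of `Φ = [G1, G2, G3]` consists exactly of the five points
`p = [0,0,1]`, `p₁ = [1,1,0]`, `p₂ = [1,-1,0]`, `p₃ = [1,3,0]`, `p₄ = [1,-3,0]`. -/
theorem indeterminacy_locus_of_Phi {K : Type*} [Field K] [CharZero K] (x y z : K)
    (hxyz : (x, y, z) ≠ (0, 0, 0)) :
    (G1 x y z = 0 ∧ G2 x y z = 0 ∧ G3 x y z = 0) ↔
    ∃ c : K, c ≠ 0 ∧
      ((x, y, z) = (c * 0, c * 0, c * 1) ∨
       (x, y, z) = (c * 1, c * 1, c * 0) ∨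
       (x, y, z) = (c * 1, c * (-1), c * 0) ∨
       (x, y, z) = (c * 1, c * 3, c * 0) ∨
       (x, y, z) = (c * 1, c * (-3), c * 0)) := by
  constructor
  · rintro ⟨h1, h2, h3⟩
    simp only [G1, G2, G3] at h1 h2 h3
    by_cases hx : x = 0
    · subst hx
      by_cases hy : y = 0
      · subst hy
        have hz : z ≠ 0 := by intro hz; exact hxyz (by simp [hz])
        exact ⟨z, hz, Or.inl (by simp)⟩
      · exfalso
        have hz : z = 0 := by
          have h : y ^ 4 * z = 0 := by linear_combination h3
          rcases mul_eq_zero.1 h with h | h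
          · exact absurd ((pow_eq_zero_iff (n := 4) (by norm_num)).1 h) hy
          · exact h
        subst hz
        have h : y ^ 5 = 0 := by linear_combination h2
        exact hy ((pow_eq_zero_iff (n := 5) (by norm_num)).1 h)
    · by_cases hz : z = 0
      · subst hz
        have hQ : (x - y) * ((x + y) * ((3 * x - y) * (3 * x + y))) = 0 := by
          have h : x * ((x - y) * ((x + y) * ((3 * x - y) * (3 * x + y)))) = 0 := by
            linear_combination h1
          exact (mul_eq_zero.1 h).resolve_left hx
        refine ⟨x, hx, ?_⟩
        simp only [Prod.mk.injEq]
        rcases mul_eq_zero.1 hQ with h | h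
        · exact Or.inr (Or.inl ⟨by ring, by linear_combination -h, by ring⟩)
        rcases mul_eq_zero.1 h with h | h
        · exact Or.inr (Or.inr (Or.inl ⟨by ring, by linear_combination h, by ring⟩))
        rcases mul_eq_zero.1 h with h | h
        · exact Or.inr (Or.inr (Or.inr (Or.inl ⟨by ring, by linear_combination -h, by ring⟩)))
        · exact Or.inr (Or.inr (Or.inr (Or.inr ⟨by ring, by linear_combination h, by ring⟩)))
      · exfalso
        have hQ : (x ^ 2 - y ^ 2) * (9 * x ^ 2 - y ^ 2) = 0 := by
          have h : z * ((x ^ 2 - y ^ 2) * (9 * x ^ 2 - y ^ 2)) = 0 := by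
            linear_combination h3
          exact (mul_eq_zero.1 h).resolve_left hz
        have h1' : y * (5 * x ^ 2 - y ^ 2) = 0 := by
          have h : x * (z * (2 * (y * (5 * x ^ 2 - y ^ 2)))) = 0 := by
            linear_combination h1 - x * hQ
          have h' := (mul_eq_zero.1 h).resolve_left hx
          have h'' := (mul_eq_zero.1 h').resolve_left hz
          rcases mul_eq_zero.1 h'' with h | h
          · exact absurd h (by norm_num)
          · exact h
        apply hx
        rcases mul_eq_zero.1 h1' with hy | h5
        · have h9 : (9 : K) * x ^ 4 = 0 := by
            linear_combination hQ + (10 * x ^ 2 * y - y ^ 3) * hy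
          have hx4 : x ^ 4 = 0 :=
            (mul_eq_zero.1 h9).resolve_left (by norm_num)
          exact (pow_eq_zero_iff (n := 4) (by norm_num)).1 hx4
        · have h16 : (16 : K) * x ^ 4 = 0 := by
            linear_combination -hQ + (5 * x ^ 2 - y ^ 2) * h5
          have hx4 : x ^ 4 = 0 :=
            (mul_eq_zero.1 h16).resolve_left (by norm_num)
          exact (pow_eq_zero_iff (n := 4) (by norm_num)).1 hx4
  · rintro ⟨c, hc, h⟩
    rcases h with h | h | h | h | h <;>
      simp only [Prod.mk.injEq] at h <;>
      obtain ⟨hx, hy, hz⟩ := h <;> subst hx <;> subst hy <;> subst hz <;>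
      exact ⟨by simp only [G1]; ring, by simp only [G2]; ring, by simp only [G3]; ring⟩

end Stmt15
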